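/- Let R ∈ (0,1) and let H be a real number with 0 < H < −(log R)/2. Then there exists a unique α > 0 such that H = 1/α + R^α (log R) / (1 − R^α). (This establishes existence and uniqueness of the solution of the defining equation of the tail index estimator for truncated Pareto-type distributions.) -/

import Mathlib

/-!
Put `x = -α log R > 0`. Since `R ^ α = e^{-x}`, the equation reads `H / (-log R) = f x` with
`f x = 1/x - 1/(e^x - 1)`. The function `f` is strictly decreasing on `(0, ∞)`, because
`f' x < 0` amounts to `x e^{x/2} < e^x - 1`, i.e. `x/2 < sinh (x/2)`; and the bounds
`1/(2 + x) ≤ f x ≤ 1/x` show that it takes every value in `(0, 1/2)`.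
-/

open Real

open Set

noncomputable def invSubInvExpSubOne (x : ℝ) : ℝ := 1 / x - 1 / (exp x - 1)

lemma mul_exp_half_lt_exp_sub_one {x : ℝ} (hx : 0 < x) : x * exp (x / 2) < exp x - 1 := by
  have hsinh : exp x - 1 = 2 * sinh (x / 2) * exp (x / 2) := by
    rw [sinh_eq, mul_div_cancel₀ _ two_ne_zero, sub_mul, ← exp_add, ← exp_add]
    norm_num
  rw [hsinh]
  gcongr
  linarith [self_lt_sinh_iff.2 (half_pos hx)]

lemma exp_div_exp_sub_one_sq_lt_inv_sq {x : ℝ} (hx : 0 < x) :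
    exp x / (exp x - 1) ^ 2 < (x ^ 2)⁻¹ := by
  have hexp : 0 < exp x - 1 := sub_pos.2 (one_lt_exp_iff.2 hx)
  have key : (x * exp (x / 2)) ^ 2 < (exp x - 1) ^ 2 := by
    gcongr
    exact mul_exp_half_lt_exp_sub_one hx
  rw [mul_pow, ← exp_nat_mul, Nat.cast_ofNat, mul_div_cancel₀ _ two_ne_zero] at key
  rw [div_lt_iff₀ (by positivity), inv_mul_eq_div, lt_div_iff₀ (by positivity), mul_comm]
  exact key

lemma hasDerivAt_invSubInvExpSubOne {x : ℝ} (hx : x ≠ 0) :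
    HasDerivAt invSubInvExpSubOne (-(x ^ 2)⁻¹ + exp x / (exp x - 1) ^ 2) x := by
  have hexp : exp x - 1 ≠ 0 := sub_ne_zero.2 (mt (exp_eq_one_iff _).1 hx)
  have h : HasDerivAt (fun y => y⁻¹ - (exp y - 1)⁻¹)
      (-(x ^ 2)⁻¹ - -exp x / (exp x - 1) ^ 2) x :=
    (hasDerivAt_inv hx).sub (((hasDerivAt_exp x).sub_const 1).inv hexp)
  show HasDerivAt (fun y => 1 / y - 1 / (exp y - 1)) _ x
  simp only [one_div]
  exact h.congr_deriv (by ring)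

lemma strictAntiOn_invSubInvExpSubOne : StrictAntiOn invSubInvExpSubOne (Ioi 0) := by
  refine strictAntiOn_of_hasDerivWithinAt_neg (f' := fun x => -(x ^ 2)⁻¹ + exp x / (exp x - 1) ^ 2)
    (convex_Ioi 0)
    (fun x hx => (hasDerivAt_invSubInvExpSubOne (ne_of_gt hx)).continuousAt.continuousWithinAt)
    (fun x hx => ?_) (fun x hx => ?_) <;> rw [interior_Ioi] at *
  · exact (hasDerivAt_invSubInvExpSubOne (ne_of_gt hx)).hasDerivWithinAt
  · linarith [exp_div_exp_sub_one_sq_lt_inv_sq (mem_Ioi.1 hx)]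

lemma one_div_two_add_le_invSubInvExpSubOne {x : ℝ} (hx : 0 < x) :
    1 / (2 + x) ≤ invSubInvExpSubOne x := by
  have hquad : x + x ^ 2 / 2 ≤ exp x - 1 := by linarith [quadratic_le_exp_of_nonneg hx.le]
  have hsplit : 1 / x - 1 / (x + x ^ 2 / 2) = 1 / (2 + x) := by
    field_simp
    ring
  rw [← hsplit]
  exact sub_le_sub_left (one_div_le_one_div_of_le (by positivity) hquad) _

lemma invSubInvExpSubOne_le_one_div {x : ℝ} (hx : 0 < x) : invSubInvExpSubOne x ≤ 1 / x := by
  have : 0 < exp x - 1 := sub_pos.2 (one_lt_exp_iff.2 hx)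
  unfold invSubInvExpSubOne
  linarith [one_div_pos.2 this]

lemma existsUnique_invSubInvExpSubOne_eq {c : ℝ} (hc₀ : 0 < c) (hc : c < 1 / 2) :
    ∃! x, 0 < x ∧ invSubInvExpSubOne x = c := by
  have ha : 0 < 1 / c - 2 := by
    rw [sub_pos, lt_one_div (by norm_num) hc₀]
    linarith
  have hfa : c ≤ invSubInvExpSubOne (1 / c - 2) := by
    simpa using one_div_two_add_le_invSubInvExpSubOne ha
  have hfb : invSubInvExpSubOne (1 / c) ≤ c := by
    simpa using invSubInvExpSubOne_le_one_div (one_div_pos.2 hc₀)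
  have hcont : ContinuousOn invSubInvExpSubOne (Icc (1 / c - 2) (1 / c)) :=
    fun x hx => (hasDerivAt_invSubInvExpSubOne (by linarith [hx.1])).continuousAt.continuousWithinAt
  obtain ⟨x, hx, hfx⟩ := intermediate_value_Icc' (by linarith) hcont ⟨hfb, hfa⟩
  refine ⟨x, ⟨ha.trans_le hx.1, hfx⟩, fun y hy => ?_⟩
  exact strictAntiOn_invSubInvExpSubOne.injOn hy.1 (ha.trans_le hx.1) (hy.2.trans hfx.symm)

lemma one_div_add_rpow_mul_log_div_eq {R α : ℝ} (hR₀ : 0 < R) (hR₁ : R ≠ 1) (hα : α ≠ 0) :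
    1 / α + R ^ α * log R / (1 - R ^ α) = -log R * invSubInvExpSubOne (-log R * α) := by
  have hlog : log R ≠ 0 := log_ne_zero_of_pos_of_ne_one hR₀ hR₁
  have hRα : R ^ α = (exp (-log R * α))⁻¹ := by
    rw [rpow_def_of_pos hR₀, ← exp_neg]
    ring_nf
  have hexp : exp (-log R * α) - 1 ≠ 0 :=
    sub_ne_zero.2 (mt (exp_eq_one_iff _).1 (mul_ne_zero (neg_ne_zero.2 hlog) hα))
  rw [hRα, invSubInvExpSubOne]
  field_simp
  ring

/-- Existence and uniqueness of the solution of the defining equation of the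
truncated-Pareto tail index estimator. -/
theorem stmt_9 (R H : ℝ) (hR : R ∈ Set.Ioo (0 : ℝ) 1) (hH0 : 0 < H)
    (hH : H < -(Real.log R) / 2) :
    ∃! α : ℝ, 0 < α ∧ H = 1 / α + R ^ α * Real.log R / (1 - R ^ α) := by
  obtain ⟨hR₀, hR₁⟩ := hR
  set L := -log R
  have hL : 0 < L := neg_pos.2 (log_neg hR₀ hR₁)
  have hc : H / L < 1 / 2 := by
    rw [div_lt_iff₀ hL]
    linarith
  have hequiv : ∀ α, 0 < α →
      (H = 1 / α + R ^ α * log R / (1 - R ^ α) ↔ invSubInvExpSubOne (L * α) = H / L) := by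
    intro α hα
    rw [one_div_add_rpow_mul_log_div_eq hR₀ hR₁.ne hα.ne', eq_div_iff hL.ne', mul_comm, eq_comm]
  obtain ⟨x, ⟨hx, hfx⟩, huniq⟩ := existsUnique_invSubInvExpSubOne_eq (div_pos hH0 hL) hc
  refine ⟨x / L, ⟨div_pos hx hL, ?_⟩, fun α ⟨hα, h⟩ => ?_⟩
  · rwa [hequiv _ (div_pos hx hL), mul_div_cancel₀ _ hL.ne']
  · rw [eq_div_iff hL.ne', mul_comm]
    exact huniq _ ⟨mul_pos hL hα, (hequiv α hα).1 h⟩
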